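/- arXiv:2204.12549 — 5 statements merged into one kernel-verified Lean document; each statement's English description precedes it below -/
import Mathlib

section
/- Let s₀ > 0, C₀ > 0, δ₀ > 0, and let φ : (0, s₀] → ℝ be a continuous monotone increasing function with φ(s) > 0 for all s ∈ (0, s₀], lim_{s→0⁺} φ(s) = 0, and satisfying t·φ(s − t) ≤ C₀·φ(s)^{1+δ₀} for all 0 < t < s ≤ s₀. Then φ(s₀) ≥ c₀ where c₀ = (s₀(1 − 2^{−δ₀})/(2C₀))^{1/δ₀}. -/
open Real Set

/-- De Giorgi type iteration lemma: a positive continuous monotone increasing function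
`φ` on `(0, s₀]` with `φ(s) → 0` as `s → 0⁺` satisfying
`t · φ(s − t) ≤ C₀ · φ(s)^(1+δ₀)` for all `0 < t < s ≤ s₀` satisfies
`φ(s₀) ≥ (s₀ (1 − 2^(−δ₀)) / (2 C₀))^(1/δ₀)`. -/
theorem stmt_3 (s₀ C₀ δ₀ : ℝ) (hs₀ : 0 < s₀) (hC₀ : 0 < C₀) (hδ₀ : 0 < δ₀)
    (φ : ℝ → ℝ)
    (hcont : ContinuousOn φ (Ioc 0 s₀))
    (hmono : MonotoneOn φ (Ioc 0 s₀))
    (hpos : ∀ s ∈ Ioc (0:ℝ) s₀, 0 < φ s)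
    (hlim : Filter.Tendsto φ (nhdsWithin 0 (Ioi 0)) (nhds 0))
    (hgrowth : ∀ t s : ℝ, 0 < t → t < s → s ≤ s₀ →
      t * φ (s - t) ≤ C₀ * (φ s) ^ (1 + δ₀)) :
    (s₀ * (1 - (2:ℝ) ^ (-δ₀)) / (2 * C₀)) ^ (1 / δ₀) ≤ φ s₀ := by
  set r : ℝ := (2:ℝ) ^ (-δ₀) with hr_def
  have hr0 : 0 < r := Real.rpow_pos_of_pos (by norm_num) _
  have hr1 : r < 1 := Real.rpow_lt_one_of_one_lt_of_neg (by norm_num) (by linarith)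
  -- Core step: from a ∈ (0, s₀], find b < a with φ b = φ a / 2
  have key : ∀ a ∈ Ioc (0:ℝ) s₀, ∃ b ∈ Ioc (0:ℝ) s₀, b < a ∧ φ b = φ a / 2 := by
    intro a ha
    have hφa : 0 < φ a := hpos a ha
    set S : Set ℝ := {x | x ∈ Ioc 0 a ∧ φ x ≤ φ a / 2} with hS_def
    have hSsub : S ⊆ Ioc 0 s₀ := fun x hx => ⟨hx.1.1, hx.1.2.trans ha.2⟩
    have hne : S.Nonempty := by
      have h1 : ∀ᶠ x in nhdsWithin (0:ℝ) (Ioi 0), φ x < φ a / 2 :=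
        hlim.eventually_lt_const (by linarith)
      have h2 : ∀ᶠ x in nhdsWithin (0:ℝ) (Ioi 0), x ∈ Ioo (0:ℝ) a :=
        Ioo_mem_nhdsGT_of_mem ⟨le_refl 0, ha.1⟩
      obtain ⟨x, hx1, hx2⟩ := (h1.and h2).exists
      exact ⟨x, ⟨⟨hx2.1, hx2.2.le⟩, hx1.le⟩⟩
    have hbdd : BddAbove S := ⟨a, fun x hx => hx.1.2⟩
    set b := sSup S with hb_def
    obtain ⟨x₀, hx₀⟩ := id hne
    have hb0 : 0 < b := lt_of_lt_of_le hx₀.1.1 (le_csSup hbdd hx₀)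
    have hba : b ≤ a := csSup_le hne fun x hx => hx.1.2
    have hbmem : b ∈ Ioc (0:ℝ) s₀ := ⟨hb0, hba.trans ha.2⟩
    have hφb_le : φ b ≤ φ a / 2 := by
      have hbc : b ∈ closure S := csSup_mem_closure hne hbdd
      have hneb : (nhdsWithin b S).NeBot := mem_closure_iff_nhdsWithin_neBot.mp hbc
      have hc : Filter.Tendsto φ (nhdsWithin b S) (nhds (φ b)) :=
        ((hcont b hbmem).mono hSsub).tendsto
      exact le_of_tendsto hc (eventually_mem_nhdsWithin.mono fun x hx => hx.2)
    have hblt : b < a := lt_of_le_of_ne hba (by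
      intro h; rw [h] at hφb_le; linarith)
    have hφb_ge : φ a / 2 ≤ φ b := by
      have hTsub : Ioc b a ⊆ Ioc (0:ℝ) s₀ := fun x hx =>
        ⟨lt_trans hb0 hx.1, hx.2.trans ha.2⟩
      have hbc : b ∈ closure (Ioc b a) := by
        rw [closure_Ioc hblt.ne]; exact ⟨le_refl b, hba⟩
      have hneb : (nhdsWithin b (Ioc b a)).NeBot :=
        mem_closure_iff_nhdsWithin_neBot.mp hbc
      have hc : Filter.Tendsto φ (nhdsWithin b (Ioc b a)) (nhds (φ b)) :=
        ((hcont b hbmem).mono hTsub).tendsto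
      refine ge_of_tendsto hc ?_
      refine eventually_mem_nhdsWithin.mono ?_
      intro x hx
      by_contra hxle
      push_neg at hxle
      have hxS : x ∈ S := ⟨⟨lt_trans hb0 hx.1, hx.2⟩, hxle.le⟩
      exact absurd (le_csSup hbdd hxS) (not_le.mpr hx.1)
    exact ⟨b, hbmem, hblt, le_antisymm hφb_le hφb_ge⟩
  choose! F hF1 hF2 hF3 using key
  set s : ℕ → ℝ := fun n => F^[n] s₀ with hs_def
  have hmem : ∀ n, s n ∈ Ioc (0:ℝ) s₀ := by
    intro n; induction n with
    | zero => exact ⟨hs₀, le_refl _⟩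
    | succ k ih =>
      have : s (k+1) = F (s k) := Function.iterate_succ_apply' F k s₀
      rw [this]; exact hF1 _ ih
  have hstep : ∀ n, s (n+1) = F (s n) := fun n => Function.iterate_succ_apply' F n s₀
  have hlt : ∀ n, s (n+1) < s n := fun n => by rw [hstep n]; exact hF2 _ (hmem n)
  have hφval : ∀ n, φ (s n) = φ s₀ / 2^n := by
    intro n; induction n with
    | zero => simp [hs_def]
    | succ k ih =>
      rw [hstep k, hF3 _ (hmem k), ih, pow_succ]
      ring
  have hφs₀ : 0 < φ s₀ := hpos s₀ ⟨hs₀, le_refl _⟩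
  set A : ℝ := (φ s₀) ^ δ₀ with hA_def
  have hA0 : 0 < A := Real.rpow_pos_of_pos hφs₀ _
  -- Bound each increment
  have hinc : ∀ n, s n - s (n+1) ≤ 2 * C₀ * A * r^n := by
    intro n
    set t := s n - s (n+1) with ht_def
    have ht0 : 0 < t := by have := hlt n; simp [ht_def]; linarith
    have hts : t < s n := by have := (hmem (n+1)).1; simp [ht_def]; linarith
    have hg := hgrowth t (s n) ht0 hts (hmem n).2
    have hsub : s n - t = s (n+1) := by simp [ht_def]
    rw [hsub] at hg
    have hφn : 0 < φ (s n) := hpos _ (hmem n)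
    have hφn1 : φ (s (n+1)) = φ (s n) / 2 := by rw [hstep n]; exact hF3 _ (hmem n)
    have hrpow : (φ (s n)) ^ (1 + δ₀) = φ (s n) * (φ (s n)) ^ δ₀ := by
      rw [Real.rpow_add hφn, Real.rpow_one]
    rw [hφn1, hrpow] at hg
    have hbound : t ≤ 2 * C₀ * (φ (s n)) ^ δ₀ := by
      have h2 : t * (φ (s n) / 2) ≤ C₀ * (φ (s n) * (φ (s n)) ^ δ₀) := hg
      have := Real.rpow_pos_of_pos hφn δ₀
      nlinarith
    have hφnδ : (φ (s n)) ^ δ₀ = A * r^n := by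
      rw [hφval n, Real.div_rpow hφs₀.le (by positivity)]
      have h1 : ((2:ℝ)^n) ^ δ₀ = ((2:ℝ) ^ δ₀)^n := by
        rw [← Real.rpow_natCast ((2:ℝ)) n, ← Real.rpow_mul (by norm_num),
          ← Real.rpow_natCast ((2:ℝ)^δ₀) n, ← Real.rpow_mul (by norm_num)]
        ring_nf
      have h2 : r ^ n = (((2:ℝ) ^ δ₀)^n)⁻¹ := by
        rw [hr_def, ← Real.rpow_natCast ((2:ℝ)^(-δ₀)) n, ← Real.rpow_mul (by norm_num),
          ← Real.rpow_natCast ((2:ℝ)^δ₀) n, ← Real.rpow_mul (by norm_num),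
          ← Real.rpow_neg (by norm_num)]
        ring_nf
      rw [h1, h2, hA_def]
      field_simp
    rw [hφnδ] at hbound
    calc t ≤ C₀ * (A * r^n) * 2 := by linarith
    _ = 2 * C₀ * A * r^n := by ring
  -- Telescoping sum bound
  have hsum : ∀ N : ℕ, s₀ - s N ≤ 2 * C₀ * A / (1 - r) := by
    intro N
    have htel : s₀ - s N = ∑ j ∈ Finset.range N, (s j - s (j+1)) := by
      rw [Finset.sum_range_sub' s N]; simp [hs_def]
    rw [htel]
    calc ∑ j ∈ Finset.range N, (s j - s (j+1))
        ≤ ∑ j ∈ Finset.range N, 2 * C₀ * A * r^j :=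
          Finset.sum_le_sum fun j _ => hinc j
      _ = 2 * C₀ * A * ∑ j ∈ Finset.range N, r^j := by rw [Finset.mul_sum]
      _ ≤ 2 * C₀ * A * (1 / (1 - r)) := by
          apply mul_le_mul_of_nonneg_left _ (by positivity)
          rw [geom_sum_eq (ne_of_lt hr1) N,
            show (r^N - 1)/(r - 1) = (1 - r^N)/(1 - r) by
              rw [div_eq_div_iff (sub_ne_zero.mpr (ne_of_lt hr1)) (sub_ne_zero.mpr (ne_of_gt hr1))]
              ring]
          rw [div_le_div_iff_of_pos_right (by linarith)]
          have : (0:ℝ) ≤ r ^ N := by positivity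
          linarith
      _ = 2 * C₀ * A / (1 - r) := by ring
  -- s N gets arbitrarily small
  have hsmall : ∀ ε > (0:ℝ), ∃ N, s N < ε := by
    intro ε hε
    set ε' := min ε s₀ with hε'_def
    have hε'0 : 0 < ε' := lt_min hε hs₀
    have hε'mem : ε' ∈ Ioc (0:ℝ) s₀ := ⟨hε'0, min_le_right _ _⟩
    have hφε' : 0 < φ ε' := hpos _ hε'mem
    obtain ⟨N, hN⟩ := exists_pow_lt_of_lt_one (div_pos hφε' hφs₀) (by norm_num : (1:ℝ)/2 < 1)
    refine ⟨N, ?_⟩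
    by_contra hge
    push_neg at hge
    have hε'le : ε' ≤ s N := le_trans (min_le_left _ _) hge
    have hmle : φ ε' ≤ φ (s N) := hmono hε'mem (hmem N) hε'le
    rw [hφval N] at hmle
    rw [lt_div_iff₀ hφs₀] at hN
    have heq : φ s₀ / 2^N = (1/2:ℝ)^N * φ s₀ := by
      rw [div_pow, one_pow]; ring
    have : φ s₀ / 2^N < φ ε' := by rw [heq]; exact hN
    linarith
  -- conclude s₀ ≤ 2 C₀ A / (1 - r)
  have hfin : s₀ ≤ 2 * C₀ * A / (1 - r) := by
    refine le_of_forall_pos_le_add fun ε hε => ?_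
    obtain ⟨N, hN⟩ := hsmall ε hε
    have := hsum N
    linarith
  have hineq : s₀ * (1 - r) / (2 * C₀) ≤ A := by
    have h1 : s₀ * (1 - r) ≤ 2 * C₀ * A := by
      rw [le_div_iff₀ (by linarith : (0:ℝ) < 1 - r)] at hfin
      linarith
    rw [div_le_iff₀ (by positivity : (0:ℝ) < 2 * C₀)]
    linarith
  have hbase0 : (0:ℝ) ≤ s₀ * (1 - r) / (2 * C₀) :=
    le_of_lt (div_pos (mul_pos hs₀ (by linarith)) (by positivity))
  calc (s₀ * (1 - (2:ℝ)^(-δ₀)) / (2 * C₀)) ^ (1/δ₀)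
      ≤ A ^ (1/δ₀) := Real.rpow_le_rpow hbase0 hineq (by positivity)
    _ = φ s₀ := by
        rw [hA_def, ← Real.rpow_mul hφs₀.le, mul_one_div_cancel hδ₀.ne', Real.rpow_one]
end

section
/- Let s₀ > 0, C₀ > 0, δ₀ > 0, and let φ : (0, s₀] → ℝ be continuous, monotone increasing, positive, with lim_{s→0⁺} φ(s) = 0, and suppose t·φ(s − t) ≤ C₀·φ(s)^{1+δ₀} for all 0 < t < s ≤ s₀. Define s_{j+1} = sup{0 < s < s_j : φ(s) ≤ φ(s_j)/2} starting from s₀. Then φ(s_j) = 2^{−j} φ(s₀) for all j ≥ 0, and s_j − s_{j+1} ≤ 2C₀ 2^{−δ₀ j} φ(s₀)^{δ₀}. -/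
open Real Set

lemma degiorgi_key (s₀ : ℝ) (φ : ℝ → ℝ)
    (hcont : ContinuousOn φ (Ioc 0 s₀))
    (hpos : ∀ s ∈ Ioc (0:ℝ) s₀, 0 < φ s)
    (hlim : Filter.Tendsto φ (nhdsWithin 0 (Ioi 0)) (nhds 0))
    (σ : ℝ) (hσ : σ ∈ Ioc 0 s₀) :
    0 < sSup {x : ℝ | 0 < x ∧ x < σ ∧ φ x ≤ φ σ / 2} ∧
    sSup {x : ℝ | 0 < x ∧ x < σ ∧ φ x ≤ φ σ / 2} < σ ∧
    φ (sSup {x : ℝ | 0 < x ∧ x < σ ∧ φ x ≤ φ σ / 2}) = φ σ / 2 := by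
  set c := φ σ / 2 with hc
  have hφσ : 0 < φ σ := hpos σ hσ
  have hcpos : 0 < c := by positivity
  set A := {x : ℝ | 0 < x ∧ x < σ ∧ φ x ≤ c} with hA
  -- A is nonempty
  have hne : A.Nonempty := by
    have h1 : ∀ᶠ x in nhdsWithin 0 (Ioi 0), φ x < c :=
      hlim (Iio_mem_nhds hcpos)
    have h2 : ∀ᶠ x in nhdsWithin 0 (Ioi 0), x < σ := by
      have : ∀ᶠ x in nhds (0:ℝ), x < σ := Filter.Tendsto.eventually_lt_const hσ.1 Filter.tendsto_id
      exact this.filter_mono nhdsWithin_le_nhds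
    have h3 : ∀ᶠ x in nhdsWithin 0 (Ioi 0), x ∈ Ioi (0:ℝ) :=
      eventually_mem_nhdsWithin
    obtain ⟨x, ⟨hx1, hx2⟩, hx3⟩ := ((h1.and h2).and h3).exists
    exact ⟨x, hx3, hx2, hx1.le⟩
  have hbdd : BddAbove A := ⟨σ, fun x hx => hx.2.1.le⟩
  set τ := sSup A with hτ
  obtain ⟨a, ha⟩ := id hne
  have hτpos : 0 < τ := lt_of_lt_of_le ha.1 (le_csSup hbdd ha)
  have hτleσ : τ ≤ σ := csSup_le hne (fun x hx => hx.2.1.le)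
  have hτmem : τ ∈ Ioc (0:ℝ) s₀ := ⟨hτpos, hτleσ.trans hσ.2⟩
  have hcontτ : Filter.Tendsto φ (nhdsWithin τ (Ioc 0 s₀)) (nhds (φ τ)) :=
    hcont τ hτmem
  -- upper bound: φ τ ≤ c
  have hupper : φ τ ≤ c := by
    by_contra h
    push_neg at h
    have hev : ∀ᶠ x in nhdsWithin τ (Ioc 0 s₀), c < φ x :=
      hcontτ (Ioi_mem_nhds h)
    rw [Metric.nhdsWithin_basis_ball.eventually_iff] at hev
    obtain ⟨ε, hε, hball⟩ := hev
    obtain ⟨b, hbA, hb⟩ := exists_lt_of_lt_csSup hne (by linarith : τ - ε < τ)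
    have hbτ : b ≤ τ := le_csSup hbdd hbA
    have : c < φ b := hball ⟨by
        rw [Metric.mem_ball, Real.dist_eq, abs_lt]; constructor <;> linarith,
      ⟨hbA.1, hbA.2.1.le.trans hσ.2⟩⟩
    exact absurd hbA.2.2 (not_le.mpr this)
  have hτltσ : τ < σ := by
    rcases lt_or_eq_of_le hτleσ with h | h
    · exact h
    · exfalso; rw [h] at hupper; simp only [hc] at hupper; linarith
  -- lower bound: c ≤ φ τ
  have hlower : c ≤ φ τ := by
    by_contra h
    push_neg at h
    have hev : ∀ᶠ x in nhdsWithin τ (Ioc 0 s₀), φ x < c :=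
      hcontτ (Iio_mem_nhds h)
    rw [Metric.nhdsWithin_basis_ball.eventually_iff] at hev
    obtain ⟨ε, hε, hball⟩ := hev
    set x := min (τ + ε/2) ((τ + σ)/2) with hx
    have hτx : τ < x := by
      apply lt_min <;> linarith
    have hxσ : x < σ := by
      calc x ≤ (τ + σ)/2 := min_le_right _ _
        _ < σ := by linarith
    have hxmem : x ∈ Ioc (0:ℝ) s₀ := ⟨hτpos.trans hτx, hxσ.le.trans hσ.2⟩
    have hdist : dist x τ < ε := by
      rw [Real.dist_eq, abs_lt]
      constructor
      · linarith
      · have : x ≤ τ + ε/2 := min_le_left _ _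
        linarith
    have hφx : φ x < c := hball ⟨Metric.mem_ball.mpr hdist, hxmem⟩
    have : x ∈ A := ⟨hxmem.1, hxσ, hφx.le⟩
    exact absurd (le_csSup hbdd this) (not_le.mpr hτx)
  exact ⟨hτpos, hτltσ, le_antisymm hupper hlower⟩

/-- The inductive step of the De Giorgi iteration: with
`s_{j+1} = sup {0 < s < s_j : φ(s) ≤ φ(s_j)/2}` starting from `s₀`, one has
`φ(s_j) = 2^(−j) φ(s₀)` and `s_j − s_{j+1} ≤ 2 C₀ 2^(−δ₀ j) φ(s₀)^(δ₀)`. -/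
theorem stmt_4 (s₀ C₀ δ₀ : ℝ) (hs₀ : 0 < s₀) (hC₀ : 0 < C₀) (hδ₀ : 0 < δ₀)
    (φ : ℝ → ℝ)
    (hcont : ContinuousOn φ (Ioc 0 s₀))
    (hmono : MonotoneOn φ (Ioc 0 s₀))
    (hpos : ∀ s ∈ Ioc (0:ℝ) s₀, 0 < φ s)
    (hlim : Filter.Tendsto φ (nhdsWithin 0 (Ioi 0)) (nhds 0))
    (hgrowth : ∀ t s : ℝ, 0 < t → t < s → s ≤ s₀ →
      t * φ (s - t) ≤ C₀ * (φ s) ^ (1 + δ₀))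
    (s : ℕ → ℝ) (hs0 : s 0 = s₀)
    (hrec : ∀ j : ℕ, s (j + 1) = sSup {x : ℝ | 0 < x ∧ x < s j ∧ φ x ≤ φ (s j) / 2}) :
    (∀ j : ℕ, φ (s j) = φ s₀ / 2 ^ j) ∧
    (∀ j : ℕ, s j - s (j + 1) ≤ 2 * C₀ * (2:ℝ) ^ (-(δ₀ * j)) * (φ s₀) ^ δ₀) := by
  have H : ∀ j : ℕ, s j ∈ Ioc (0:ℝ) s₀ ∧ φ (s j) = φ s₀ / 2 ^ j ∧ s (j+1) < s j := by
    intro j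
    induction j with
    | zero =>
      have hmem : s 0 ∈ Ioc (0:ℝ) s₀ := by rw [hs0]; exact ⟨hs₀, le_refl _⟩
      obtain ⟨h1, h2, _⟩ := degiorgi_key s₀ φ hcont hpos hlim (s 0) hmem
      refine ⟨hmem, by rw [hs0]; simp, ?_⟩
      rw [hrec 0]; exact h2
    | succ j ih =>
      obtain ⟨hmem, hφ, hlt⟩ := ih
      have hmem' : s (j+1) ∈ Ioc (0:ℝ) s₀ := by
        obtain ⟨h1, h2, _⟩ := degiorgi_key s₀ φ hcont hpos hlim (s j) hmem
        rw [hrec j]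
        exact ⟨h1, (h2.le.trans hmem.2)⟩
      have hφ' : φ (s (j+1)) = φ s₀ / 2 ^ (j+1) := by
        obtain ⟨h1, h2, h3⟩ := degiorgi_key s₀ φ hcont hpos hlim (s j) hmem
        rw [hrec j, h3, hφ]
        ring
      refine ⟨hmem', hφ', ?_⟩
      obtain ⟨h1, h2, _⟩ := degiorgi_key s₀ φ hcont hpos hlim (s (j+1)) hmem'
      rw [hrec (j+1)]
      exact h2
  have hφs₀ : 0 < φ s₀ := hpos s₀ ⟨hs₀, le_refl _⟩
  refine ⟨fun j => (H j).2.1, fun j => ?_⟩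
  obtain ⟨hmem, hφ, hlt⟩ := H j
  obtain ⟨hmem', hφ', _⟩ := H (j+1)
  set t := s j - s (j+1) with ht
  have htpos : 0 < t := by simp only [ht]; linarith
  have htlt : t < s j := by simp only [ht]; linarith [hmem'.1]
  have hg := hgrowth t (s j) htpos htlt hmem.2
  have hsub : s j - t = s (j+1) := by simp [ht]
  rw [hsub, hφ'] at hg
  have hφj : 0 < φ (s j) := hpos _ hmem
  have hrpow : (φ (s j)) ^ (1 + δ₀) = φ (s j) * (φ (s j)) ^ δ₀ := by
    rw [Real.rpow_add hφj, Real.rpow_one]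
  have hφ'2 : φ s₀ / 2 ^ (j+1) = φ (s j) / 2 := by rw [hφ]; ring
  rw [hφ'2, hrpow] at hg
  -- hg : t * (φ (s j) / 2) ≤ C₀ * (φ (s j) * φ (s j) ^ δ₀)
  have ht2 : t ≤ 2 * C₀ * (φ (s j)) ^ δ₀ := by
    have h2 : t * φ (s j) ≤ 2 * C₀ * (φ (s j)) ^ δ₀ * φ (s j) := by nlinarith
    exact le_of_mul_le_mul_right (by linarith [h2]) hφj
  have hkey : (φ (s j)) ^ δ₀ = (2:ℝ) ^ (-(δ₀ * j)) * (φ s₀) ^ δ₀ := by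
    rw [hφ, Real.div_rpow hφs₀.le (by positivity)]
    rw [← Real.rpow_natCast (2:ℝ) j, ← Real.rpow_mul (by norm_num),
      mul_comm δ₀ (j:ℝ), Real.rpow_neg (by norm_num : (0:ℝ) ≤ 2), div_eq_mul_inv]
    ring
  calc s j - s (j+1) = t := rfl
    _ ≤ 2 * C₀ * (φ (s j)) ^ δ₀ := ht2
    _ = 2 * C₀ * (2:ℝ) ^ (-(δ₀ * j)) * (φ s₀) ^ δ₀ := by rw [hkey]; ring
end

section
/- Let ψ be a C² plurisubharmonic function on a domain in ℂⁿ such that the real Hessian D²ψ (as a 2n×2n real symmetric matrix) is positive semidefinite. Then det(ψ_{ij̄}) ≥ 2^{−n} [det(D²ψ)]^{1/2}, where (ψ_{ij̄}) is the complex Hessian. -/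
open scoped ComplexOrder
open Matrix

section LinAlg

variable {k : Type*} [Fintype k] [DecidableEq k]

lemma psd_det_exists {A : Matrix k k ℂ} (hA : A.PosSemidef) :
    ∃ r : ℝ, 0 ≤ r ∧ A.det = (r : ℂ) := by
  refine ⟨∏ i, hA.1.eigenvalues i,
    Finset.prod_nonneg fun i _ => hA.eigenvalues_nonneg i, ?_⟩
  rw [hA.1.det_eq_prod_eigenvalues]; push_cast; rfl

lemma psd_det_re_nonneg {A : Matrix k k ℂ} (hA : A.PosSemidef) : 0 ≤ A.det.re := by
  obtain ⟨r, hr, h⟩ := psd_det_exists hA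
  rw [h]; simpa using hr

lemma posDef_of_psd_det_ne_zero {A : Matrix k k ℂ} (hA : A.PosSemidef) (h : A.det ≠ 0) :
    A.PosDef := by
  refine posDef_iff_dotProduct_mulVec.mpr ⟨hA.1, fun x hx => ?_⟩
  rcases (hA.dotProduct_mulVec_nonneg x).lt_or_eq with hlt | heq
  · exact hlt
  · exfalso
    have hzero : A *ᵥ x = 0 := (hA.dotProduct_mulVec_zero_iff x).mp heq.symm
    exact h ((Matrix.exists_mulVec_eq_zero_iff).mp ⟨x, hx, hzero⟩)

lemma det_one_add_psd {Z : Matrix k k ℂ} (hZ : Z.PosSemidef) :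
    ∃ s : ℝ, 1 ≤ s ∧ (1 + Z).det = (s : ℂ) := by
  set U : Matrix k k ℂ := (Matrix.IsHermitian.eigenvectorUnitary hZ.1 : Matrix k k ℂ) with hU
  have hUU : U * star U = 1 :=
    (Matrix.mem_unitaryGroup_iff).mp (Matrix.IsHermitian.eigenvectorUnitary hZ.1).2
  have hspec : Z = U * Matrix.diagonal (Complex.ofReal ∘ hZ.1.eigenvalues) * star U :=
    hZ.1.spectral_theorem
  set D : Matrix k k ℂ := Matrix.diagonal (Complex.ofReal ∘ hZ.1.eigenvalues) with hD
  have key : 1 + Z = U * (1 + D) * star U := by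
    rw [Matrix.mul_add, Matrix.add_mul, Matrix.mul_one, hUU, ← hspec]
  refine ⟨∏ i, (1 + hZ.1.eigenvalues i), ?_, ?_⟩
  · calc (1:ℝ) = ∏ _i : k, (1:ℝ) := by simp
      _ ≤ ∏ i, (1 + hZ.1.eigenvalues i) :=
        Finset.prod_le_prod (fun i _ => zero_le_one)
          (fun i _ => by linarith [hZ.eigenvalues_nonneg i])
  · rw [key, Matrix.det_mul_right_comm, hUU, Matrix.one_mul]
    have : (1 : Matrix k k ℂ) + D = Matrix.diagonal (fun i => 1 + (hZ.1.eigenvalues i : ℂ)) := by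
      rw [hD, ← Matrix.diagonal_one, Matrix.diagonal_add]
      rfl
    rw [this, Matrix.det_diagonal]
    push_cast
    rfl

open scoped MatrixOrder in
lemma det_re_mono_psd {X W : Matrix k k ℂ} (hX : X.PosSemidef) (hW : W.PosSemidef) :
    X.det.re ≤ (X + W).det.re := by
  by_cases h : X.det = 0
  · rw [h]
    simpa using psd_det_re_nonneg (hX.add hW)
  · set R := CFC.sqrt X with hRdef
    have hR : R.PosSemidef := (CFC.sqrt_nonneg X).posSemidef
    have hRR : R * R = X := CFC.sqrt_mul_sqrt_self X hX.nonneg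
    have hRdet : R.det ≠ 0 := fun h0 => h (by rw [← hRR, Matrix.det_mul, h0, zero_mul])
    have hRinv : R * R⁻¹ = 1 := Matrix.mul_nonsing_inv _ (isUnit_iff_ne_zero.mpr hRdet)
    have hRinv' : R⁻¹ * R = 1 := Matrix.nonsing_inv_mul _ (isUnit_iff_ne_zero.mpr hRdet)
    set Z := R⁻¹ * W * R⁻¹ with hZdef
    have hZ : Z.PosSemidef := by
      have hherm : R⁻¹ᴴ = R⁻¹ := hR.1.inv
      have := hW.conjTranspose_mul_mul_same (B := R⁻¹)
      rwa [hherm] at this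
    have hRZR : R * Z * R = W := by
      rw [hZdef, ← Matrix.mul_assoc, ← Matrix.mul_assoc, hRinv, Matrix.one_mul,
        Matrix.mul_assoc, hRinv', Matrix.mul_one]
    have key : X + W = R * (1 + Z) * R := by
      rw [Matrix.mul_add, Matrix.add_mul, Matrix.mul_one, hRR, hRZR]
    obtain ⟨s, hs1, hsdet⟩ := det_one_add_psd hZ
    obtain ⟨r, hr0, hXdet⟩ := psd_det_exists hX
    have hdet : (X + W).det = ((r * s : ℝ) : ℂ) := by
      rw [key, Matrix.det_mul, Matrix.det_mul, hsdet, mul_comm, ← mul_assoc, ← Matrix.det_mul,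
        hRR, hXdet]
      push_cast
      try ring
    rw [hdet, hXdet]
    simp only [Complex.ofReal_re]
    nlinarith

lemma posDef_toBlocks₁₁ {m m' : Type*} [Fintype m] [DecidableEq m] [Fintype m'] [DecidableEq m']
    {M : Matrix (m ⊕ m') (m ⊕ m') ℂ} (hM : M.PosDef) :
    (M.toBlocks₁₁).PosDef := by
  refine posDef_iff_dotProduct_mulVec.mpr ⟨hM.1.submatrix Sum.inl, fun x hx => ?_⟩
  have hx' : (Sum.elim x 0 : m ⊕ m' → ℂ) ≠ 0 := by
    intro hcon
    exact hx (funext fun i => congrFun hcon (Sum.inl i))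
  have := hM.dotProduct_mulVec_pos hx'
  convert this using 2
  simp only [dotProduct, Matrix.mulVec, Fintype.sum_sum_type, Sum.elim_inl, Sum.elim_inr,
    Pi.star_apply, Pi.zero_apply, star_zero, zero_mul, mul_zero, Finset.sum_const_zero, add_zero,
    Matrix.toBlocks₁₁, Matrix.of_apply]

lemma fischer {m m' : Type*} [Fintype m] [DecidableEq m] [Fintype m'] [DecidableEq m']
    {M : Matrix (m ⊕ m') (m ⊕ m') ℂ} (hM : M.PosSemidef) :
    M.det.re ≤ (M.toBlocks₁₁).det.re * (M.toBlocks₂₂).det.re := by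
  set H := M.toBlocks₁₁ with hHdef
  set S := M.toBlocks₁₂ with hSdef
  set K := M.toBlocks₂₂ with hKdef
  have hH : H.PosSemidef := hM.submatrix Sum.inl
  have hK : K.PosSemidef := hM.submatrix Sum.inr
  have hM21 : M.toBlocks₂₁ = Sᴴ := by
    ext i j
    have := congrFun (congrFun hM.1 (Sum.inr i)) (Sum.inl j)
    simpa [hSdef, Matrix.toBlocks₂₁, Matrix.toBlocks₁₂, Matrix.conjTranspose_apply] using this.symm
  have hMeq : M = Matrix.fromBlocks H S Sᴴ K := by
    rw [← hM21, hHdef, hSdef, hKdef]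
    exact (Matrix.fromBlocks_toBlocks M).symm
  by_cases hdet : M.det = 0
  · rw [hdet]
    simpa using mul_nonneg (psd_det_re_nonneg hH) (psd_det_re_nonneg hK)
  · have hMd : M.PosDef := posDef_of_psd_det_ne_zero hM hdet
    have hHd : H.PosDef := posDef_toBlocks₁₁ hMd
    have hHdetne : H.det ≠ 0 := hHd.det_pos.ne'
    haveI : Invertible H := H.invertibleOfIsUnitDet (isUnit_iff_ne_zero.mpr hHdetne)
    have hSchur : (K - Sᴴ * H⁻¹ * S).PosSemidef :=
      (Matrix.PosDef.fromBlocks₁₁ S K hHd).mp (hMeq ▸ hM)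
    have hdet_eq : M.det = H.det * (K - Sᴴ * H⁻¹ * S).det := by
      rw [hMeq, Matrix.det_fromBlocks₁₁, Matrix.invOf_eq_nonsing_inv]
    have hW : (Sᴴ * H⁻¹ * S).PosSemidef := hHd.inv.posSemidef.conjTranspose_mul_mul_same S
    have hKsum : (K - Sᴴ * H⁻¹ * S) + Sᴴ * H⁻¹ * S = K := by abel
    have hmono : (K - Sᴴ * H⁻¹ * S).det.re ≤ K.det.re := by
      have := det_re_mono_psd hSchur hW
      rwa [hKsum] at this
    obtain ⟨a, ha0, hHre⟩ := psd_det_exists hHd.posSemidef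
    obtain ⟨b, hb0, hSre⟩ := psd_det_exists hSchur
    have hre : M.det.re = H.det.re * (K - Sᴴ * H⁻¹ * S).det.re := by
      rw [hdet_eq, hHre, hSre]
      push_cast
      try simp
    rw [hre]
    exact mul_le_mul_of_nonneg_left hmono (psd_det_re_nonneg hHd.posSemidef)

open scoped MatrixOrder in
lemma psd_map_complex {A : Matrix k k ℝ} (hA : A.PosSemidef) :
    (A.map (Complex.ofReal ·)).PosSemidef := by
  obtain ⟨B, hB⟩ := CStarAlgebra.nonneg_iff_eq_star_mul_self.mp hA.nonneg
  rw [Matrix.star_eq_conjTranspose] at hB; subst hB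
  have h1 : ((Bᴴ * B).map (Complex.ofReal ·)) = (B.map (Complex.ofReal ·))ᴴ * (B.map (Complex.ofReal ·)) := by
    show ((Bᴴ * B).map ⇑Complex.ofRealHom) = (B.map ⇑Complex.ofRealHom)ᴴ * (B.map ⇑Complex.ofRealHom)
    rw [Matrix.map_mul]
    congr 1
    exact Matrix.conjTranspose_map _ (fun a => (Complex.conj_ofReal a).symm)
  rw [h1]
  exact Matrix.posSemidef_conjTranspose_mul_self _

end LinAlg

/-- Second real derivative of `ψ` at `x` in directions `v`, `w`. -/
noncomputable def secondDeriv (n : ℕ) (ψ : (Fin n → ℂ) → ℝ) (x v w : Fin n → ℂ) : ℝ :=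
  fderiv ℝ (fun y => fderiv ℝ ψ y w) x v

/-- The complex Hessian `(ψ_{i j̄})` of `ψ` at `x`, expressed through second real
derivatives via `z_i = x_{2i−1} + √−1 x_{2i}`. -/
noncomputable def cplxHess (n : ℕ) (ψ : (Fin n → ℂ) → ℝ) (x : Fin n → ℂ) :
    Matrix (Fin n) (Fin n) ℂ := fun i j =>
  ((1 / 4 : ℂ) * ((secondDeriv n ψ x (Pi.single i 1) (Pi.single j 1)
      + secondDeriv n ψ x (Pi.single i Complex.I) (Pi.single j Complex.I) : ℝ) : ℂ))
  + (Complex.I / 4) * ((secondDeriv n ψ x (Pi.single i Complex.I) (Pi.single j 1)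
      - secondDeriv n ψ x (Pi.single i 1) (Pi.single j Complex.I) : ℝ) : ℂ)

/-- The real Hessian `D²ψ` of `ψ` at `x`, as a `2n × 2n` real matrix in the real
coordinates `x_1, …, x_{2n}` (indexed by `Fin n ⊕ Fin n`). -/
noncomputable def realHess (n : ℕ) (ψ : (Fin n → ℂ) → ℝ) (x : Fin n → ℂ) :
    Matrix (Fin n ⊕ Fin n) (Fin n ⊕ Fin n) ℝ := fun a b =>
  secondDeriv n ψ x
    (Sum.elim (fun i => Pi.single i 1) (fun i => Pi.single i Complex.I) a)
    (Sum.elim (fun i => Pi.single i 1) (fun i => Pi.single i Complex.I) b)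

/-- If `ψ` is `C²` on an open set `U` and its real Hessian at `x ∈ U` is positive
semidefinite, then `det(ψ_{i j̄}) ≥ 2^(−n) (det D²ψ)^(1/2)`. -/
theorem stmt_10 (n : ℕ) (U : Set (Fin n → ℂ)) (hU : IsOpen U)
    (ψ : (Fin n → ℂ) → ℝ) (hψ : ContDiffOn ℝ 2 ψ U)
    (x : Fin n → ℂ) (hx : x ∈ U)
    (hconv : (realHess n ψ x).PosSemidef) :
    (2 : ℝ) ^ (-(n : ℝ)) * ((realHess n ψ x).det) ^ ((1 : ℝ) / 2)
      ≤ (cplxHess n ψ x).det.re := by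
  set A := realHess n ψ x with hAdef
  set A' : Matrix (Fin n ⊕ Fin n) (Fin n ⊕ Fin n) ℂ := A.map (Complex.ofReal ·) with hA'def
  have hA'psd : A'.PosSemidef := psd_map_complex hconv
  set Q : Matrix (Fin n ⊕ Fin n) (Fin n ⊕ Fin n) ℂ :=
    Matrix.fromBlocks ((1/2 : ℂ) • 1) ((1/2 : ℂ) • 1)
      ((-Complex.I/2) • 1) ((Complex.I/2) • 1) with hQdef
  have hQH : Qᴴ = Matrix.fromBlocks ((1/2 : ℂ) • 1) ((Complex.I/2) • 1)
      ((1/2 : ℂ) • 1) ((-Complex.I/2) • 1) := by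
    rw [hQdef, Matrix.fromBlocks_conjTranspose]
    rw [Matrix.fromBlocks_inj]
    refine ⟨?_, ?_, ?_, ?_⟩ <;>
      simp [Matrix.conjTranspose_smul, Complex.star_def, map_div₀, Complex.conj_I] <;>
      module
  set M := Qᴴ * A' * Q with hMdef
  have hMpsd : M.PosSemidef := hA'psd.conjTranspose_mul_mul_same Q
  set B11 := A'.toBlocks₁₁ with hB11
  set B12 := A'.toBlocks₁₂ with hB12
  set B21 := A'.toBlocks₂₁ with hB21
  set B22 := A'.toBlocks₂₂ with hB22
  have hblocks : M = Matrix.fromBlocks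
      ((1/4 : ℂ) • (B11 + B22) + (Complex.I/4) • (B21 - B12))
      ((1/4 : ℂ) • (B11 - B22) + (Complex.I/4) • (B21 + B12))
      ((1/4 : ℂ) • (B11 - B22) - (Complex.I/4) • (B21 + B12))
      ((1/4 : ℂ) • (B11 + B22) - (Complex.I/4) • (B21 - B12)) := by
    rw [hMdef, hQH, hQdef]
    conv_lhs => rw [← Matrix.fromBlocks_toBlocks A', ← hB11, ← hB12, ← hB21, ← hB22]
    rw [Matrix.fromBlocks_multiply, Matrix.fromBlocks_multiply, Matrix.fromBlocks_inj]
    refine ⟨?_, ?_, ?_, ?_⟩ <;>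
      simp only [Matrix.smul_mul, Matrix.mul_smul, Matrix.one_mul, Matrix.mul_one, smul_smul,
        smul_add, smul_sub] <;>
      match_scalars <;> ring_nf <;> norm_num [Complex.I_sq]
  have hH : M.toBlocks₁₁ = cplxHess n ψ x := by
    rw [hblocks, Matrix.toBlocks_fromBlocks₁₁]
    ext i j
    simp only [Matrix.add_apply, Matrix.sub_apply, Matrix.smul_apply, smul_eq_mul,
      hB11, hB12, hB21, hB22, Matrix.toBlocks₁₁, Matrix.toBlocks₁₂, Matrix.toBlocks₂₁,
      Matrix.toBlocks₂₂, Matrix.of_apply, hA'def, Matrix.map_apply, hAdef, realHess,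
      Sum.elim_inl, Sum.elim_inr, cplxHess]
    push_cast
    ring
  have hK : M.toBlocks₂₂ = ((cplxHess n ψ x)ᴴ)ᵀ := by
    rw [hblocks, Matrix.toBlocks_fromBlocks₂₂]
    ext i j
    simp only [Matrix.add_apply, Matrix.sub_apply, Matrix.smul_apply, smul_eq_mul,
      hB11, hB12, hB21, hB22, Matrix.toBlocks₁₁, Matrix.toBlocks₁₂, Matrix.toBlocks₂₁,
      Matrix.toBlocks₂₂, Matrix.of_apply, hA'def, Matrix.map_apply, hAdef, realHess,
      Sum.elim_inl, Sum.elim_inr, cplxHess, Matrix.transpose_apply,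
      Matrix.conjTranspose_apply, _root_.map_add, _root_.map_sub, _root_.map_mul, map_div₀, _root_.map_one, map_ofNat,
      Complex.conj_I, Complex.conj_ofReal, Complex.star_def]
    push_cast
    ring
  have hKdet : (M.toBlocks₂₂).det.re = (cplxHess n ψ x).det.re := by
    rw [hK, Matrix.det_transpose, Matrix.det_conjTranspose]
    simp [Complex.star_def]
  have hQQ : Qᴴ * Q = (1/2 : ℂ) • 1 := by
    rw [hQH, hQdef, Matrix.fromBlocks_multiply, ← Matrix.fromBlocks_one,
      Matrix.fromBlocks_smul, Matrix.fromBlocks_inj]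
    refine ⟨?_, ?_, ?_, ?_⟩ <;>
      simp only [Matrix.smul_mul, Matrix.mul_smul, Matrix.one_mul, Matrix.mul_one, smul_smul] <;>
      match_scalars <;> ring_nf <;> norm_num [Complex.I_sq]
  have hcard : Fintype.card (Fin n ⊕ Fin n) = 2 * n := by
    simp [Fintype.card_sum, two_mul]
  have hdetA' : A'.det = (A.det : ℂ) := by
    rw [hA'def]
    exact (RingHom.map_det Complex.ofRealHom A).symm
  have hdetM : M.det = (((1/2 : ℝ)^(2*n) * A.det : ℝ) : ℂ) := by
    have h1 : M.det = (Qᴴ.det * Q.det) * A'.det := by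
      rw [hMdef, Matrix.det_mul, Matrix.det_mul]; ring
    have h2 : Qᴴ.det * Q.det = ((1/2 : ℂ))^(2*n) := by
      rw [← Matrix.det_mul, hQQ, Matrix.det_smul, Matrix.det_one, mul_one, hcard]
    rw [h1, h2, hdetA']
    push_cast
    ring
  have hfis := fischer hMpsd
  have hHpsd : (M.toBlocks₁₁).PosSemidef := hMpsd.submatrix Sum.inl
  have hr0 : 0 ≤ (cplxHess n ψ x).det.re := by
    rw [← hH]; exact psd_det_re_nonneg hHpsd
  set r := (cplxHess n ψ x).det.re with hrdef
  have hMre : M.det.re = (1/2 : ℝ)^(2*n) * A.det := by rw [hdetM, Complex.ofReal_re]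
  have hineq : (1/2 : ℝ)^(2*n) * A.det ≤ r * r := by
    calc (1/2 : ℝ)^(2*n) * A.det = M.det.re := hMre.symm
      _ ≤ (M.toBlocks₁₁).det.re * (M.toBlocks₂₂).det.re := hfis
      _ = r * r := by rw [hH, hKdet]
  have hM0 : 0 ≤ M.det.re := psd_det_re_nonneg hMpsd
  have hpow : ((1:ℝ)/2)^(2*n) * (2:ℝ)^(2*n) = 1 := by
    rw [← mul_pow]; norm_num
  have hA0 : 0 ≤ A.det := by
    nlinarith [hMre, hM0, pow_pos (by norm_num : (0:ℝ) < 1/2) (2*n),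
      pow_pos (by norm_num : (0:ℝ) < 2) (2*n)]
  have hle : A.det ≤ ((2:ℝ)^n * r)^2 := by
    have h2 : ((2:ℝ)^n)^2 = (2:ℝ)^(2*n) := by rw [← pow_mul]; ring_nf
    nlinarith [hineq, pow_pos (by norm_num : (0:ℝ) < 2) (2*n)]
  have hsq : Real.sqrt A.det ≤ (2:ℝ)^n * r := by
    calc Real.sqrt A.det ≤ Real.sqrt (((2:ℝ)^n * r)^2) := Real.sqrt_le_sqrt hle
      _ = (2:ℝ)^n * r := Real.sqrt_sq (by positivity)
  rw [show (2:ℝ) ^ (-(n:ℝ)) = ((2:ℝ)^n)⁻¹ by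
    rw [← Real.rpow_natCast 2 n, ← Real.rpow_neg (by norm_num)]]
  rw [show A.det ^ ((1:ℝ)/2) = Real.sqrt A.det from (Real.sqrt_eq_rpow _).symm]
  calc ((2:ℝ)^n)⁻¹ * Real.sqrt A.det ≤ ((2:ℝ)^n)⁻¹ * ((2:ℝ)^n * r) := by
        apply mul_le_mul_of_nonneg_left hsq (by positivity)
    _ = r := by field_simp
end

section
/- Let (X, μ) be a finite measure space, p > n ≥ 1, β > 0, and let F, u be measurable functions with u ≤ 0 and A := ∫ (−u) e^{nF} dμ > 0. Suppose ∫ exp(β(−u)^{(n+1)/n}/A^{1/n}) dμ ≤ C and ∫ e^{nF}(1+n|F|)^p dμ ≤ K. Then ∫ (−u)^{p(n+1)/n} e^{nF} dμ ≤ C' · A^{p/n}, where C' depends only on n, p, β, C, K. -/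
open MeasureTheory ENNReal

lemma aux_rpow_le_fact_mul_exp (p : ℝ) (hp : 0 ≤ p) (v : ℝ) (hv : 0 ≤ v) :
    v ^ p ≤ (Nat.ceil p).factorial * Real.exp v := by
  have h1 : (1 : ℝ) ≤ ((Nat.ceil p).factorial : ℝ) := by exact_mod_cast Nat.one_le_iff_ne_zero.2 (Nat.factorial_pos _).ne'
  rcases le_or_gt v 1 with h | h
  · calc v ^ p ≤ 1 := Real.rpow_le_one hv h hp
    _ ≤ (Nat.ceil p).factorial * Real.exp v := by
        nlinarith [Real.exp_pos v, Real.one_le_exp hv]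
  · have hfac : (0:ℝ) < (Nat.ceil p).factorial := by positivity
    have h2 : v ^ p ≤ v ^ ((Nat.ceil p : ℝ)) :=
      Real.rpow_le_rpow_of_exponent_le h.le (Nat.le_ceil p)
    have h3 : v ^ ((Nat.ceil p : ℝ)) = v ^ (Nat.ceil p) := Real.rpow_natCast v _
    have h4 : v ^ (Nat.ceil p) / (Nat.ceil p).factorial ≤ Real.exp v :=
      Real.pow_div_factorial_le_exp v hv _
    calc v ^ p ≤ v ^ (Nat.ceil p) := h2.trans_eq h3
    _ ≤ (Nat.ceil p).factorial * Real.exp v := by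
        rw [div_le_iff₀ hfac] at h4; linarith [h4]

lemma aux_pointwise (p : ℝ) (hp : 0 ≤ p) (v nG G : ℝ) (hv : 0 ≤ v) (hnG : nG ≤ G)
    (hG : 0 ≤ G) :
    v ^ p * Real.exp nG ≤
      Real.exp nG * (1 + G) ^ p + (Nat.ceil p).factorial * Real.exp (2 * v) := by
  rcases le_or_gt v (1 + G) with h | h
  · have h1 : v ^ p ≤ (1 + G) ^ p := Real.rpow_le_rpow hv h hp
    have he : 0 < Real.exp nG := Real.exp_pos _
    have hfe : (0:ℝ) ≤ (Nat.ceil p).factorial * Real.exp (2 * v) := by positivity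
    nlinarith
  · have hnGv : nG ≤ v := by linarith
    have h1 : v ^ p ≤ (Nat.ceil p).factorial * Real.exp v := aux_rpow_le_fact_mul_exp p hp v hv
    have h2 : Real.exp nG ≤ Real.exp v := Real.exp_le_exp.2 hnGv
    have h3 : Real.exp v * Real.exp v = Real.exp (2 * v) := by
      rw [← Real.exp_add]; ring_nf
    have hvp : 0 ≤ v ^ p := Real.rpow_nonneg hv p
    have hep : 0 ≤ Real.exp nG * (1 + G) ^ p := by
      positivity
    nlinarith [Real.exp_pos v, Real.exp_pos nG]

/-- If `u ≤ 0`, `A = ∫ (−u) e^{nF} dμ > 0`, the exponential integral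
`∫ exp(β(−u)^{(n+1)/n}/A^{1/n}) dμ` is at most `C`, and the entropy
`∫ e^{nF}(1+n|F|)^p dμ` is at most `K`, then
`∫ (−u)^{p(n+1)/n} e^{nF} dμ ≤ C' A^{p/n}` with `C'` depending only on `n, p, β, C, K`. -/
theorem stmt_12 (n : ℕ) (p β C K : ℝ) (hn : 1 ≤ n) (hp : (n : ℝ) < p)
    (hβ : 0 < β) (hC : 0 < C) (hK : 0 < K) :
    ∃ C' > 0, ∀ (α : Type) (mα : MeasurableSpace α) (μ : Measure α),
      IsFiniteMeasure μ →
      ∀ (F u : α → ℝ), Measurable F → Measurable u → (∀ x, u x ≤ 0) →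
      ∀ A : ℝ, 0 < A →
      (∫⁻ x, ENNReal.ofReal ((-u x) * Real.exp (n * F x)) ∂μ = ENNReal.ofReal A) →
      (∫⁻ x, ENNReal.ofReal
          (Real.exp (β * (-u x) ^ (((n : ℝ) + 1) / n) / A ^ ((1 : ℝ) / n))) ∂μ
        ≤ ENNReal.ofReal C) →
      (∫⁻ x, ENNReal.ofReal (Real.exp (n * F x) * (1 + n * |F x|) ^ p) ∂μ
        ≤ ENNReal.ofReal K) →
      ∫⁻ x, ENNReal.ofReal ((-u x) ^ (p * ((n : ℝ) + 1) / n) * Real.exp (n * F x)) ∂μ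
        ≤ ENNReal.ofReal (C' * A ^ (p / n)) := by
  have hn0 : (0:ℝ) < n := by exact_mod_cast Nat.lt_of_lt_of_le Nat.zero_lt_one hn
  have hp0 : 0 < p := hn0.trans hp
  set Cp : ℝ := ((Nat.ceil p).factorial : ℝ) with hCp
  have hCp0 : 0 < Cp := by positivity
  refine ⟨(2 / β) ^ p * (K + Cp * C), by positivity, ?_⟩
  intro α mα μ _ F u hF hu hu0 A hA hAint hexp hent
  set c : ℝ := (2 / β) ^ p * A ^ (p / n) with hc
  have hc0 : 0 < c := by positivity
  set g : α → ℝ := fun x => Real.exp (n * F x) * (1 + n * |F x|) ^ p with hg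
  set h : α → ℝ := fun x =>
    Real.exp (β * (-u x) ^ (((n : ℝ) + 1) / n) / A ^ ((1 : ℝ) / n)) with hh
  have hg0 : ∀ x, 0 ≤ g x := fun x => by
    have : (0:ℝ) ≤ 1 + n * |F x| := by positivity
    positivity
  have hh0 : ∀ x, 0 ≤ h x := fun x => (Real.exp_pos _).le
  -- pointwise bound
  have key : ∀ x, ENNReal.ofReal ((-u x) ^ (p * ((n : ℝ) + 1) / n) * Real.exp (n * F x))
      ≤ ENNReal.ofReal (c * (g x + Cp * h x)) := by
    intro x
    apply ENNReal.ofReal_le_ofReal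
    have hux : (0:ℝ) ≤ -u x := by linarith [hu0 x]
    set t : ℝ := (-u x) ^ (((n : ℝ) + 1) / n) with ht
    have htn : 0 ≤ t := Real.rpow_nonneg hux _
    have hAn : 0 < A ^ ((1:ℝ) / n) := Real.rpow_pos_of_pos hA _
    set v : ℝ := (β / 2) * t / A ^ ((1:ℝ) / n) with hv
    have hv0 : 0 ≤ v := by positivity
    have e1 : (-u x) ^ (p * ((n : ℝ) + 1) / n) = t ^ p := by
      rw [ht, ← Real.rpow_mul hux]
      congr 1
      ring
    have e2 : t = (2 / β) * A ^ ((1:ℝ) / n) * v := by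
      rw [hv]; field_simp; try ring
    have e3 : t ^ p = c * v ^ p := by
      rw [e2, Real.mul_rpow (by positivity) hv0, Real.mul_rpow (by positivity) hAn.le,
        ← Real.rpow_mul hA.le, hc]
      congr 2
      · ring
    have e4 : β * t / A ^ ((1:ℝ) / n) = 2 * v := by
      rw [hv]; field_simp
    have hpt := aux_pointwise p hp0.le v (n * F x) (n * |F x|) hv0
      (by
        have : F x ≤ |F x| := le_abs_self _
        nlinarith) (by positivity)
    calc (-u x) ^ (p * ((n : ℝ) + 1) / n) * Real.exp (n * F x)
        = c * (v ^ p * Real.exp (n * F x)) := by rw [e1, e3]; ring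
      _ ≤ c * (Real.exp (n * F x) * (1 + n * |F x|) ^ p
            + (Nat.ceil p).factorial * Real.exp (2 * v)) := by
          exact mul_le_mul_of_nonneg_left hpt hc0.le
      _ = c * (g x + Cp * h x) := by rw [hg, hh, hCp, ← e4, ht]
  -- measurability
  have hmg : Measurable fun x => ENNReal.ofReal (g x) := by
    apply ENNReal.measurable_ofReal.comp
    fun_prop
  have hmh : Measurable fun x => ENNReal.ofReal (h x) := by
    apply ENNReal.measurable_ofReal.comp
    fun_prop
  calc ∫⁻ x, ENNReal.ofReal ((-u x) ^ (p * ((n : ℝ) + 1) / n) * Real.exp (n * F x)) ∂μ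
      ≤ ∫⁻ x, ENNReal.ofReal (c * (g x + Cp * h x)) ∂μ := lintegral_mono key
    _ = ∫⁻ x, ENNReal.ofReal c * (ENNReal.ofReal (g x) + ENNReal.ofReal Cp * ENNReal.ofReal (h x)) ∂μ := by
        congr 1; funext x
        rw [ENNReal.ofReal_mul hc0.le, ENNReal.ofReal_add (hg0 x) (by positivity),
          ENNReal.ofReal_mul hCp0.le]
    _ = ENNReal.ofReal c * ∫⁻ x, (ENNReal.ofReal (g x) + ENNReal.ofReal Cp * ENNReal.ofReal (h x)) ∂μ := by
        rw [lintegral_const_mul (f := fun x => ENNReal.ofReal (g x) + ENNReal.ofReal Cp * ENNReal.ofReal (h x)) _ (hmg.add (hmh.const_mul _))]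
    _ = ENNReal.ofReal c * ((∫⁻ x, ENNReal.ofReal (g x) ∂μ)
          + ENNReal.ofReal Cp * ∫⁻ x, ENNReal.ofReal (h x) ∂μ) := by
        rw [lintegral_add_left hmg, lintegral_const_mul _ hmh]
    _ ≤ ENNReal.ofReal c * (ENNReal.ofReal K + ENNReal.ofReal Cp * ENNReal.ofReal C) := by
        exact mul_le_mul_right (add_le_add hent (mul_le_mul_right hexp _)) _
    _ = ENNReal.ofReal (c * (K + Cp * C)) := by
        rw [ENNReal.ofReal_mul hc0.le, ENNReal.ofReal_add hK.le (by positivity),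
          ENNReal.ofReal_mul hCp0.le]
    _ = ENNReal.ofReal ((2 / β) ^ p * (K + Cp * C) * A ^ (p / n)) := by
        congr 1; ring
end

section
/- Let Θ be an n×n positive definite Hermitian matrix defined from a positive definite Hermitian matrix G by Θ = (1/(n−1))(tr(G)·I − G) (with n ≥ 2, written with respect to an orthonormal basis). Then Θ is positive definite, and det Θ ≥ det G. -/
open scoped ComplexOrder
open Matrix

lemma posDef_mul_mul_conjTranspose' {n : ℕ} {A : Matrix (Fin n) (Fin n) ℂ} (hA : A.PosDef)
    {B : Matrix (Fin n) (Fin n) ℂ} (hB : IsUnit B) : (B * A * Bᴴ).PosDef := by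
  refine Matrix.PosDef.of_dotProduct_mulVec_pos (Matrix.isHermitian_mul_mul_conjTranspose B hA.1) fun x hx => ?_
  have hBH : IsUnit Bᴴ := (Matrix.isUnit_conjTranspose _).mpr hB
  have hinj := Matrix.mulVec_injective_iff_isUnit.mpr hBH
  have hx' : Bᴴ *ᵥ x ≠ 0 := by
    intro h
    apply hx
    have : Bᴴ *ᵥ x = Bᴴ *ᵥ 0 := by simpa using h
    exact hinj this
  have := hA.dotProduct_mulVec_pos hx'
  simpa only [star_mulVec, Matrix.dotProduct_mulVec, Matrix.vecMul_vecMul,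
    Matrix.conjTranspose_conjTranspose, ← Matrix.mulVec_mulVec] using this

/-- If `G` is an `n×n` positive definite Hermitian matrix (`n ≥ 2`) and
`Θ = (1/(n−1))(tr(G)·I − G)`, then `Θ` is positive definite and `det Θ ≥ det G`. -/
theorem stmt_17 (n : ℕ) (hn : 2 ≤ n) (G Θ : Matrix (Fin n) (Fin n) ℂ)
    (hG : G.PosDef)
    (hΘ : Θ = ((1 : ℂ) / ((n : ℂ) - 1)) • (G.trace • (1 : Matrix (Fin n) (Fin n) ℂ) - G)) :
    Θ.PosDef ∧ G.det.re ≤ Θ.det.re := by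
  classical
  have hH := hG.isHermitian
  set μ : Fin n → ℝ := hH.eigenvalues with hμdef
  have hμ : ∀ i, 0 < μ i := hG.eigenvalues_pos
  set U : Matrix (Fin n) (Fin n) ℂ :=
    (Matrix.IsHermitian.eigenvectorUnitary hH : Matrix (Fin n) (Fin n) ℂ) with hUdef
  have hUU : U * star U = 1 :=
    Matrix.mem_unitaryGroup_iff.mp (Matrix.IsHermitian.eigenvectorUnitary hH).2
  have hUU' : star U * U = 1 :=
    Matrix.mem_unitaryGroup_iff'.mp (Matrix.IsHermitian.eigenvectorUnitary hH).2
  have hspec : G = U * Matrix.diagonal (RCLike.ofReal ∘ μ) * star U := hH.spectral_theorem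
  have hn1 : (0:ℝ) < (n:ℝ) - 1 := by
    have : (2:ℝ) ≤ (n:ℝ) := by exact_mod_cast hn
    linarith
  have hnc : ((n:ℂ) - 1) ≠ 0 := by
    intro h
    have : ((n:ℝ) - 1 : ℝ) = 0 := by exact_mod_cast (by push_cast at h ⊢; exact_mod_cast h : ((n:ℝ):ℂ) - 1 = 0)
    linarith
  set d : Fin n → ℝ := fun i => ((∑ k, μ k) - μ i) / ((n:ℝ) - 1) with hddef
  have hd : ∀ i, 0 < d i := by
    intro i
    apply div_pos _ hn1
    rw [← Finset.sum_erase_eq_sub (Finset.mem_univ i)]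
    apply Finset.sum_pos (fun k _ => hμ k)
    rw [← Finset.card_pos, Finset.card_erase_of_mem (Finset.mem_univ i), Finset.card_univ,
      Fintype.card_fin]
    omega
  have htr : G.trace = ((∑ i, μ i : ℝ) : ℂ) := by
    conv_lhs => rw [hspec]
    rw [Matrix.trace_mul_cycle, hUU', Matrix.one_mul, Matrix.trace_diagonal]
    push_cast
    rfl
  have key : ((1 : ℂ) / ((n : ℂ) - 1)) •
      ((((∑ i, μ i : ℝ) : ℂ)) • (1 : Matrix (Fin n) (Fin n) ℂ)
        - Matrix.diagonal (RCLike.ofReal ∘ μ)) = Matrix.diagonal (fun i => (d i : ℂ)) := by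
    ext i j
    rcases eq_or_ne i j with rfl | hij
    · simp only [Matrix.smul_apply, Matrix.sub_apply, Matrix.one_apply_eq,
        Matrix.diagonal_apply_eq, Function.comp_apply, smul_eq_mul, hddef]
      have : ((n:ℂ) - 1) = (((n:ℝ) - 1 : ℝ) : ℂ) := by push_cast; ring
      rw [this]
      push_cast
      field_simp
      rfl
    · simp [Matrix.diagonal_apply_ne _ hij, Matrix.one_apply_ne hij]
  have hΘ' : Θ = U * Matrix.diagonal (fun i => (d i : ℂ)) * star U := by
    rw [hΘ, htr, ← key]
    conv_lhs => rw [hspec]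
    rw [Matrix.mul_smul, Matrix.smul_mul, Matrix.mul_sub, Matrix.sub_mul, Matrix.mul_smul,
      Matrix.smul_mul, Matrix.mul_one, hUU]
  have hdetU : U.det * (star U).det = 1 := by
    rw [← Matrix.det_mul, hUU, Matrix.det_one]
  have hUunit : IsUnit U :=
    (Matrix.isUnit_iff_isUnit_det U).mpr (IsUnit.of_mul_eq_one _ hdetU)
  have hΔ : (Matrix.diagonal (fun i => (d i : ℂ))).PosDef :=
    Matrix.PosDef.diagonal fun i => by exact_mod_cast hd i
  have hdetΘ : Θ.det.re = ∏ i, d i := by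
    rw [hΘ', Matrix.det_mul, Matrix.det_mul, mul_right_comm, hdetU, one_mul,
      Matrix.det_diagonal]
    rw [← Complex.ofReal_prod]
    exact Complex.ofReal_re _
  have hdetG : G.det.re = ∏ i, μ i := by
    have : G.det = ((∏ i, μ i : ℝ) : ℂ) := by
      rw [hH.det_eq_prod_eigenvalues]
      push_cast
      rfl
    rw [this]
    exact Complex.ofReal_re _
  constructor
  · rw [hΘ', Matrix.star_eq_conjTranspose]
    exact posDef_mul_mul_conjTranspose' hΔ hUunit
  · rw [hdetΘ, hdetG]
    set w : ℝ := 1 / ((n:ℝ) - 1) with hwdef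
    have hw : 0 ≤ w := le_of_lt (by positivity)
    have hcard : ∀ i : Fin n, ((Finset.univ.erase i).card : ℝ) = (n:ℝ) - 1 := by
      intro i
      rw [Finset.card_erase_of_mem (Finset.mem_univ i), Finset.card_univ, Fintype.card_fin]
      have : 1 ≤ n := by omega
      push_cast [Nat.cast_sub this]
      ring
    have key2 : ∀ i : Fin n, ∏ k ∈ Finset.univ.erase i, (μ k) ^ w ≤ d i := by
      intro i
      have hAM := Real.geom_mean_le_arith_mean_weighted (Finset.univ.erase i)
        (fun _ => w) μ (fun _ _ => hw)
        (by rw [Finset.sum_const, nsmul_eq_mul, hcard i, hwdef]; field_simp)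
        (fun k _ => (hμ k).le)
      calc ∏ k ∈ Finset.univ.erase i, (μ k) ^ w ≤ ∑ k ∈ Finset.univ.erase i, w * μ k := hAM
        _ = d i := by
            rw [← Finset.mul_sum, Finset.sum_erase_eq_sub (Finset.mem_univ i), hddef, hwdef]
            field_simp
    have prodid : ∏ i, ∏ k ∈ Finset.univ.erase i, (μ k) ^ w = ∏ i, μ i := by
      rw [Finset.prod_comm' (t' := Finset.univ) (s' := fun k => Finset.univ.erase k)
        (by intro i k; simp [eq_comm, Finset.mem_erase, and_comm])]
      refine Finset.prod_congr rfl fun k _ => ?_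
      rw [Finset.prod_const, Finset.card_erase_of_mem (Finset.mem_univ k), Finset.card_univ,
        Fintype.card_fin, ← Real.rpow_natCast ((μ k) ^ w) (n - 1), ← Real.rpow_mul (hμ k).le]
      rw [show w * ((n - 1 : ℕ) : ℝ) = 1 by
        rw [hwdef, Nat.cast_sub (by omega : 1 ≤ n)]
        push_cast
        field_simp]
      exact Real.rpow_one _
    calc ∏ i, μ i = ∏ i, ∏ k ∈ Finset.univ.erase i, (μ k) ^ w := prodid.symm
      _ ≤ ∏ i, d i := Finset.prod_le_prod
          (fun i _ => Finset.prod_nonneg fun k _ => Real.rpow_nonneg (hμ k).le w)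
          (fun i _ => key2 i)
end
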